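/- For a Euclidean triangle with side lengths r₁+r₂, r₂+r₃, r₃+r₁ (r_i > 0) and inner angle a_i opposite the side of length r_j+r_k, the 1-form w = Σᵢ (a_i/r_i) dr_i is closed on the space of positive radius triples, i.e., ∂(a_i/r_i)/∂r_j = ∂(a_j/r_j)/∂r_i for all i,j. -/

import Mathlib

open Real

noncomputable def packAngle (x y z : ℝ) : ℝ :=
  Real.arccos (((x + y) ^ 2 + (x + z) ^ 2 - (y + z) ^ 2) / (2 * (x + y) * (x + z)))

/-!
By the cosine law, `cos aₓ = 1 - 2yz / ((x+y)(x+z))`, and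
`sin aₓ = 2√(xyz(x+y+z)) / ((x+y)(x+z))` (Heron's formula). Differentiating the arccos gives
`∂(aₓ/x)/∂y = z / ((x+y) √(xyz(x+y+z)))`, which is visibly symmetric in `x` and `y`.
-/

lemma packAngle_comm (x y z : ℝ) : packAngle x y z = packAngle x z y := by
  unfold packAngle
  ring_nf

lemma packAngle_eq_arccos {x y z : ℝ} (hxy : x + y ≠ 0) (hxz : x + z ≠ 0) :
    packAngle x y z = arccos (1 - 2 * y * z / ((x + y) * (x + z))) := by
  unfold packAngle
  congr 1
  field_simp
  ring

lemma hasDerivAt_packAngle {x y z : ℝ} (hx : 0 < x) (hy : 0 < y) (hz : 0 < z) :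
    HasDerivAt (fun t => packAngle x t z)
      (x * z / ((x + y) * √(x * y * z * (x + y + z)))) y := by
  set c : ℝ → ℝ := fun t => 1 - 2 * t * z / ((x + t) * (x + z))
  have hxy : 0 < x + y := by positivity
  have hxz : 0 < x + z := by positivity
  have hQ : 0 < x * y * z * (x + y + z) := by positivity
  have hc : HasDerivAt c (-(2 * x * z) / ((x + y) ^ 2 * (x + z))) y := by
    have := (((hasDerivAt_id' y).const_mul 2).mul_const z).div
      (((hasDerivAt_id' y).const_add x).mul_const (x + z)) (by positivity)
    refine (this.const_sub 1).congr_deriv ?_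
    field_simp
    ring
  have hc_lt_one : c y < 1 := by
    have : 0 < 2 * y * z / ((x + y) * (x + z)) := by positivity
    simp only [c]
    linarith
  have hc_gt_neg_one : -1 < c y := by
    simp only [c]
    rw [neg_lt_sub_iff_lt_add, div_lt_iff₀ (by positivity)]
    nlinarith [mul_pos hx hy, mul_pos hx hz]
  have hsin : √(1 - c y ^ 2) = 2 * √(x * y * z * (x + y + z)) / ((x + y) * (x + z)) := by
    have hsq := sq_sqrt hQ.le
    rw [← sqrt_sq (by positivity : 0 ≤ 2 * √(x * y * z * (x + y + z)) / ((x + y) * (x + z)))]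
    congr 1
    simp only [c]
    rw [div_pow, mul_pow, hsq]
    field_simp
    ring
  have hfun : (fun t => packAngle x t z) =ᶠ[nhds y] fun t => arccos (c t) := by
    filter_upwards [lt_mem_nhds (by linarith : -x < y)] with t ht
    exact packAngle_eq_arccos (by linarith) hxz.ne'
  refine (((hasDerivAt_arccos hc_gt_neg_one.ne' hc_lt_one.ne).comp y hc).congr_of_eventuallyEq
    hfun).congr_deriv ?_
  rw [hsin]
  field_simp

lemma deriv_packAngle_div {x y z : ℝ} (hx : 0 < x) (hy : 0 < y) (hz : 0 < z) :
    deriv (fun t => packAngle x t z / x) y = z / ((x + y) * √(x * y * z * (x + y + z))) := by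
  rw [((hasDerivAt_packAngle hx hy hz).div_const x).deriv]
  field_simp

theorem cdv_one_form_closed (r1 r2 r3 : ℝ) (h1 : 0 < r1) (h2 : 0 < r2) (h3 : 0 < r3) :
    deriv (fun t => packAngle r1 t r3 / r1) r2 = deriv (fun t => packAngle r2 t r3 / r2) r1 ∧
    deriv (fun t => packAngle r1 r2 t / r1) r3 = deriv (fun t => packAngle r3 r2 t / r3) r1 ∧
    deriv (fun t => packAngle r2 r1 t / r2) r3 = deriv (fun t => packAngle r3 r1 t / r3) r2 := by
  refine ⟨?_, ?_, ?_⟩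
  · rw [deriv_packAngle_div h1 h2 h3, deriv_packAngle_div h2 h1 h3]
    ring_nf
  · simp_rw [packAngle_comm r1 r2, packAngle_comm r3 r2]
    rw [deriv_packAngle_div h1 h3 h2, deriv_packAngle_div h3 h1 h2]
    ring_nf
  · simp_rw [packAngle_comm r2 r1, packAngle_comm r3 r1]
    rw [deriv_packAngle_div h2 h3 h1, deriv_packAngle_div h3 h2 h1]
    ring_nf
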